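/- Assume (A1): σ_min(Dh(x)) ≥ σ̲ > 0 on C := {x : ‖h(x)‖ ≤ R}, and (A3): ‖h(x+v) − h(x) − Dh(x)[v]‖ ≤ C_h‖v‖² for all x ∈ C, v ∈ E. Let x ∈ C with β > max{β₁(x), β₂(x), β₃(x)}, and suppose ‖∇g(x)‖ ≤ ε₁ for some ε₁ with 0 ≤ ε₁ ≤ R/2. Then for every d ∈ E with ‖d‖ = 1 and every t ∈ [0, t₂(x)], the point x + t·d lies in C, where t₂(x) := ( −σ₁(Dh(x)) + √( σ₁(Dh(x))² + 2C_h·R ) ) / (2C_h). -/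

import Mathlib

open scoped RealInnerProductSpace ContDiff

noncomputable section

variable {E : Type*} [NormedAddCommGroup E] [InnerProductSpace ℝ E] [FiniteDimensional ℝ E] {m : ℕ}

/-- The least-squares multipliers `λ(x) = (Dh(x) ∘ Dh(x)*)⁻¹ (Dh(x)[∇f(x)]) = (Dh(x)*)† ∇f(x)`.
(When `Dh(x)` is surjective, `Dh(x) ∘ Dh(x)*` is bijective and `Function.invFun` returns
its genuine inverse applied to `Dh(x)[∇f(x)]`.) -/
def lam (f : E → ℝ) (h : E → EuclideanSpace ℝ (Fin m)) (x : E) : EuclideanSpace ℝ (Fin m) :=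
  Function.invFun
    (fun y => fderiv ℝ h x (ContinuousLinearMap.adjoint (fderiv ℝ h x) y))
    (fderiv ℝ h x (gradient f x))

/-- Fletcher's augmented Lagrangian `g(x) = f(x) − ⟪λ(x), h(x)⟫ + β‖h(x)‖²`. -/
def flal (f : E → ℝ) (h : E → EuclideanSpace ℝ (Fin m)) (β : ℝ) (x : E) : ℝ :=
  f x - ⟪lam f h x, h x⟫ + β * ‖h x‖ ^ 2

/-- The smallest singular value `σ_min(A) = min_{‖y‖=1} ‖A*[y]‖` of a linear map. -/
def sigmaMin (A : E →L[ℝ] EuclideanSpace ℝ (Fin m)) : ℝ :=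
  sInf ((fun y => ‖ContinuousLinearMap.adjoint A y‖) '' {y : EuclideanSpace ℝ (Fin m) | ‖y‖ = 1})

/-- `C_λ(x) = ‖Dλ(x)‖`, the operator norm of the derivative of the multipliers. -/
def Clam (f : E → ℝ) (h : E → EuclideanSpace ℝ (Fin m)) (x : E) : ℝ :=
  ‖fderiv ℝ (lam f h) x‖

/-- `β₁(x) = σ₁(Dh(x))·C_λ(x) / (2σ_min(Dh(x))²)`. -/
def beta1 (f : E → ℝ) (h : E → EuclideanSpace ℝ (Fin m)) (x : E) : ℝ :=
  ‖fderiv ℝ h x‖ * Clam f h x / (2 * sigmaMin (fderiv ℝ h x) ^ 2)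

/-- `β₂(x) = C_λ(x)/σ_min(Dh(x))`. -/
def beta2 (f : E → ℝ) (h : E → EuclideanSpace ℝ (Fin m)) (x : E) : ℝ :=
  Clam f h x / sigmaMin (fderiv ℝ h x)

/-- `β₃(x) = 1/σ_min(Dh(x))`. -/
def beta3 (h : E → EuclideanSpace ℝ (Fin m)) (x : E) : ℝ :=
  1 / sigmaMin (fderiv ℝ h x)


section AuxEigen

open ContinuousLinearMap

theorem sigmaMin_mul_le' (A : E →L[ℝ] EuclideanSpace ℝ (Fin m)) (y : EuclideanSpace ℝ (Fin m)) :
    sigmaMin A * ‖y‖ ≤ ‖ContinuousLinearMap.adjoint A y‖ := by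
  rcases eq_or_ne y 0 with rfl | hy
  · simp
  · have hny : ‖y‖ ≠ 0 := norm_ne_zero_iff.mpr hy
    have hu : ‖(‖y‖⁻¹ • y)‖ = 1 := by
      rw [norm_smul]; simp [abs_of_nonneg, inv_mul_cancel₀ hny]
    have hb : BddBelow ((fun y => ‖ContinuousLinearMap.adjoint A y‖) ''
        {y : EuclideanSpace ℝ (Fin m) | ‖y‖ = 1}) :=
      ⟨0, by rintro r ⟨u, -, rfl⟩; exact norm_nonneg _⟩
    have h1 : sigmaMin A ≤ ‖ContinuousLinearMap.adjoint A (‖y‖⁻¹ • y)‖ :=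
      csInf_le hb ⟨_, hu, rfl⟩
    rw [map_smul, norm_smul] at h1
    simp only [norm_inv, norm_norm] at h1
    calc sigmaMin A * ‖y‖ ≤ (‖y‖⁻¹ * ‖(ContinuousLinearMap.adjoint A) y‖) * ‖y‖ :=
          mul_le_mul_of_nonneg_right h1 (norm_nonneg _)
      _ = ‖(ContinuousLinearMap.adjoint A) y‖ := by field_simp

theorem AAadj_inner' (A : E →L[ℝ] EuclideanSpace ℝ (Fin m)) (y z : EuclideanSpace ℝ (Fin m)) :
    ⟪A (ContinuousLinearMap.adjoint A y), z⟫
      = ⟪(ContinuousLinearMap.adjoint A) y, (ContinuousLinearMap.adjoint A) z⟫ :=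
  (ContinuousLinearMap.adjoint_inner_right A (ContinuousLinearMap.adjoint A y) z).symm

theorem AAadj_eq_zero' (A : E →L[ℝ] EuclideanSpace ℝ (Fin m)) {σl : ℝ} (hσ : 0 < σl)
    (hA : sigmaMin A ≥ σl) {w : EuclideanSpace ℝ (Fin m)}
    (hw : A (ContinuousLinearMap.adjoint A w) = 0) : w = 0 := by
  have h0 : ⟪(ContinuousLinearMap.adjoint A) w, (ContinuousLinearMap.adjoint A) w⟫ = 0 := by
    rw [← AAadj_inner', hw, inner_zero_left]
  rw [real_inner_self_eq_norm_sq] at h0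
  have h1 : ‖(ContinuousLinearMap.adjoint A) w‖ = 0 := by
    nlinarith [norm_nonneg ((ContinuousLinearMap.adjoint A) w)]
  have h2 := sigmaMin_mul_le' A w
  rw [h1] at h2
  have : ‖w‖ = 0 := by nlinarith [norm_nonneg w]
  simpa using norm_eq_zero.mp this

theorem bijective_AAadj' (A : E →L[ℝ] EuclideanSpace ℝ (Fin m)) {σl : ℝ} (hσ : 0 < σl)
    (hA : sigmaMin A ≥ σl) :
    Function.Bijective (A ∘L ContinuousLinearMap.adjoint A) := by
  have hinj : Function.Injective (A ∘L ContinuousLinearMap.adjoint A) := by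
    intro a b hab
    have h : A (ContinuousLinearMap.adjoint A (a - b)) = 0 := by
      simp only [map_sub]
      rw [sub_eq_zero]
      exact hab
    have := AAadj_eq_zero' A hσ hA h
    rwa [sub_eq_zero] at this
  refine ⟨hinj, ?_⟩
  exact (LinearMap.injective_iff_surjective
    (f := (A ∘L ContinuousLinearMap.adjoint A :
      EuclideanSpace ℝ (Fin m) →ₗ[ℝ] EuclideanSpace ℝ (Fin m)))).mp hinj

theorem isUnit_AAadj' (A : E →L[ℝ] EuclideanSpace ℝ (Fin m)) {σl : ℝ} (hσ : 0 < σl)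
    (hA : sigmaMin A ≥ σl) : IsUnit (A ∘L ContinuousLinearMap.adjoint A) := by
  set T := A ∘L ContinuousLinearMap.adjoint A with hT
  have hb := bijective_AAadj' A hσ hA
  refine ⟨⟨T, ((ContinuousLinearEquiv.ofBijective T (LinearMap.ker_eq_bot.mpr hb.1)
    (LinearMap.range_eq_top.mpr hb.2)).symm :
      EuclideanSpace ℝ (Fin m) →L[ℝ] EuclideanSpace ℝ (Fin m)), ?_, ?_⟩, rfl⟩
  · refine ContinuousLinearMap.ext fun x => ?_
    rw [ContinuousLinearMap.mul_apply, ContinuousLinearMap.one_apply]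
    exact ContinuousLinearEquiv.ofBijective_apply_symm_apply T _ _ x
  · refine ContinuousLinearMap.ext fun x => ?_
    rw [ContinuousLinearMap.mul_apply, ContinuousLinearMap.one_apply]
    exact ContinuousLinearEquiv.ofBijective_symm_apply_apply T _ _ x

/-- adjoint as a real CLM. -/
def adjCLM' : (E →L[ℝ] EuclideanSpace ℝ (Fin m)) →L[ℝ] (EuclideanSpace ℝ (Fin m) →L[ℝ] E) :=
  LinearMap.toContinuousLinearMap
    { toFun := fun A => ContinuousLinearMap.adjoint A
      map_add' := by intro A B; exact map_add _ A B
      map_smul' := by intro c A; simp [map_smulₛₗ, starRingEnd_apply] }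

/-- toDual.symm as a real CLM. -/
def toDualSymmCLM' : (StrongDual ℝ E) →L[ℝ] E :=
  LinearMap.toContinuousLinearMap
    { toFun := fun φ => (InnerProductSpace.toDual ℝ E).symm φ
      map_add' := by intro A B; exact map_add _ A B
      map_smul' := by intro c A; simp [map_smulₛₗ, starRingEnd_apply] }

def Smap' (h : E → EuclideanSpace ℝ (Fin m)) (y : E) :
    EuclideanSpace ℝ (Fin m) →L[ℝ] EuclideanSpace ℝ (Fin m) :=
  (fderiv ℝ h y).comp (ContinuousLinearMap.adjoint (fderiv ℝ h y))

theorem isUnit_bijective' {T : EuclideanSpace ℝ (Fin m) →L[ℝ] EuclideanSpace ℝ (Fin m)}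
    (hu : IsUnit T) : Function.Bijective T := by
  obtain ⟨u, rfl⟩ := hu
  constructor
  · intro a b hab
    have h1 := congrArg
      (fun z => (↑u⁻¹ : EuclideanSpace ℝ (Fin m) →L[ℝ] EuclideanSpace ℝ (Fin m)) z) hab
    simpa [← ContinuousLinearMap.mul_apply, u.inv_mul] using h1
  · intro b
    exact ⟨(↑u⁻¹ : EuclideanSpace ℝ (Fin m) →L[ℝ] EuclideanSpace ℝ (Fin m)) b,
      by simp [← ContinuousLinearMap.mul_apply, u.mul_inv]⟩

theorem lam_T_apply' (f : E → ℝ) (h : E → EuclideanSpace ℝ (Fin m)) (y : E)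
    (hsurj : Function.Surjective (Smap' h y)) :
    (Smap' h y) (lam f h y) = fderiv ℝ h y (gradient f y) := by
  have hfun : (fun z => fderiv ℝ h y (ContinuousLinearMap.adjoint (fderiv ℝ h y) z))
      = ⇑(Smap' h y) := rfl
  rw [lam, hfun]
  exact Function.invFun_eq (hsurj _)

theorem lam_eq' (f : E → ℝ) (h : E → EuclideanSpace ℝ (Fin m)) (y : E)
    (hu : IsUnit (Smap' h y)) :
    lam f h y = Ring.inverse (Smap' h y) (fderiv ℝ h y (gradient f y)) := by
  have hb := isUnit_bijective' hu
  apply hb.1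
  rw [lam_T_apply' f h y hb.2]
  have h2 : (Smap' h y) (Ring.inverse (Smap' h y) (fderiv ℝ h y (gradient f y)))
      = ((Smap' h y) * Ring.inverse (Smap' h y)) (fderiv ℝ h y (gradient f y)) := rfl
  rw [h2, Ring.mul_inverse_cancel _ hu, ContinuousLinearMap.one_apply]

theorem lam_differentiableAt' (f : E → ℝ) (h : E → EuclideanSpace ℝ (Fin m))
    (hf : ContDiff ℝ ∞ f) (hh : ContDiff ℝ ∞ h) (x : E) (hu : IsUnit (Smap' h x)) :
    DifferentiableAt ℝ (lam f h) x := by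
  have hD : Differentiable ℝ (fderiv ℝ h) :=
    (hh.fderiv_right (m := ∞) (by exact_mod_cast le_refl _)).differentiable
      (by simp)
  have hS : Differentiable ℝ (Smap' h) := fun y =>
    (hD y).clm_comp ((differentiableAt_const (adjCLM' (E := E) (m := m))).clm_apply (hD y))
  have hgradf : Differentiable ℝ (gradient f) := by
    have : gradient f = fun y => toDualSymmCLM' (fderiv ℝ f y) := rfl
    rw [this]
    exact fun y => (differentiableAt_const _).clm_apply
      (((hf.fderiv_right (m := ∞) (by exact_mod_cast le_refl _)).differentiable
        (by simp)) y)
  have hb : DifferentiableAt ℝ (fun y => fderiv ℝ h y (gradient f y)) x :=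
    (hD x).clm_apply (hgradf x)
  have hev : ∀ᶠ y in nhds x, IsUnit (Smap' h y) :=
    (hS x).continuousAt.eventually_mem (Units.isOpen.mem_nhds hu)
  have heq : lam f h =ᶠ[nhds x]
      fun y => Ring.inverse (Smap' h y) (fderiv ℝ h y (gradient f y)) :=
    hev.mono fun y hy => lam_eq' f h y hy
  rw [Filter.EventuallyEq.differentiableAt_iff heq]
  exact (((hS x).inverse hu)).clm_apply hb

end AuxEigen

open Classical in
/-- The step-size bound `t₁(x)` of Proposition 3.2 (gradient steps stay in `C`); when
`∇g(x) = 0` the first two entries of the minimum are `+∞`, so only the third remains. -/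
def t1 (f : E → ℝ) (h : E → EuclideanSpace ℝ (Fin m)) (β R Ch : ℝ) (x : E) : ℝ :=
  if gradient (flal f h β) x = 0 then 1 / (2 * β * ‖fderiv ℝ h x‖ ^ 2)
  else
    min (Real.sqrt (R / (2 * Ch)) / ‖gradient (flal f h β) x‖)
      (min ((2 * β * sigmaMin (fderiv ℝ h x) ^ 2 - ‖fderiv ℝ h x‖ * Clam f h x) * R /
          (2 * Ch * ‖gradient (flal f h β) x‖ ^ 2))
        (1 / (2 * β * ‖fderiv ℝ h x‖ ^ 2)))

/-- The step-size bound `t₂(x)` of Proposition 3.4 (eigensteps stay in `C`). -/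
def t2 (h : E → EuclideanSpace ℝ (Fin m)) (R Ch : ℝ) (x : E) : ℝ :=
  (-‖fderiv ℝ h x‖ + Real.sqrt (‖fderiv ℝ h x‖ ^ 2 + 2 * Ch * R)) / (2 * Ch)

/-- `L_g = max_{y ∈ C} ‖∇²g(y)‖`. -/
def Lg (f : E → ℝ) (h : E → EuclideanSpace ℝ (Fin m)) (β R : ℝ) : ℝ :=
  sSup ((fun y => ‖fderiv ℝ (gradient (flal f h β)) y‖) '' {y : E | ‖h y‖ ≤ R})

/-- `M_g = max_{y ∈ C} ‖∇³g(y)‖`. -/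
def Mg (f : E → ℝ) (h : E → EuclideanSpace ℝ (Fin m)) (β R : ℝ) : ℝ :=
  sSup ((fun y => ‖iteratedFDeriv ℝ 3 (flal f h β) y‖) '' {y : E | ‖h y‖ ≤ R})

theorem aux_wbound {σ W Z H : ℝ} (h1 : σ * Z ≤ W) (h2 : W ^ 2 ≤ H * Z)
    (hσ : 0 < σ) (hW : 0 ≤ W) (hZ : 0 ≤ Z) (hH : 0 ≤ H) : σ * W ≤ H := by
  rcases eq_or_lt_of_le hW with hW0 | hW0
  · rw [← hW0, mul_zero]; exact hH
  · nlinarith [mul_le_mul_of_nonneg_left h1 hH, mul_le_mul_of_nonneg_left h2 (le_of_lt hσ)]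

theorem aux_hbound {β σ C H W ε : ℝ} (h : 2 * β * H ^ 2 ≤ ε * W + C * W * H)
    (hσW : σ * W ≤ H) (hσ : 0 < σ) (hβ2 : C < β * σ) (hβ3 : 1 < β * σ)
    (hH : 0 ≤ H) (hW : 0 ≤ W) (hε : 0 ≤ ε) (hC : 0 ≤ C) : H ≤ ε := by
  rcases eq_or_lt_of_le hH with hH0 | hH0
  · rw [← hH0]; exact hε
  · have k1 : σ * (ε * W) ≤ ε * H := by nlinarith [mul_le_mul_of_nonneg_left hσW hε]
    have k2 : σ * (C * W * H) ≤ C * H * H := by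
      nlinarith [mul_le_mul_of_nonneg_left hσW (mul_nonneg hC hH)]
    have k3 : 2 * (β * σ) * H ^ 2 ≤ ε * H + C * H * H := by
      nlinarith [mul_le_mul_of_nonneg_left h (le_of_lt hσ)]
    have k4 : C * H * H ≤ β * σ * H ^ 2 := by
      nlinarith [mul_nonneg (sub_nonneg.mpr (le_of_lt hβ2)) (sq_nonneg H)]
    have k5 : β * σ * H ^ 2 ≤ ε * H := by linarith
    have k6 : H * H ≤ ε * H := by
      nlinarith [mul_nonneg (sub_nonneg.mpr (le_of_lt hβ3)) (sq_nonneg H)]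
    exact le_of_mul_le_mul_right k6 hH0

theorem aux_t2 {a Ch R t : ℝ} (hCh : 0 < Ch) (hR : 0 < R) (ha : 0 ≤ a)
    (ht0 : 0 ≤ t) (ht : t ≤ (-a + Real.sqrt (a ^ 2 + 2 * Ch * R)) / (2 * Ch)) :
    Ch * t ^ 2 + a * t ≤ R / 2 := by
  set s := Real.sqrt (a ^ 2 + 2 * Ch * R) with hsdef
  have hs : s ^ 2 = a ^ 2 + 2 * Ch * R := Real.sq_sqrt (by positivity)
  have hsnn : 0 ≤ s := Real.sqrt_nonneg _
  have hT : Ch * ((-a + s) / (2 * Ch)) ^ 2 + a * ((-a + s) / (2 * Ch)) = R / 2 := by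
    field_simp
    nlinarith [hs]
  have h2 : t ^ 2 ≤ ((-a + s) / (2 * Ch)) ^ 2 := pow_le_pow_left₀ ht0 ht 2
  nlinarith [mul_le_mul_of_nonneg_left h2 (le_of_lt hCh), mul_le_mul_of_nonneg_left ht ha]

/-- Unit-norm (eigen)steps stay in the region `C`: under (A1) and (A3), if `x ∈ C`,
`β > max{β₁(x), β₂(x), β₃(x)}` and `‖∇g(x)‖ ≤ ε₁ ≤ R/2`, then `x + t·d ∈ C` for every
unit-norm `d` and every `t ∈ [0, t₂(x)]`. -/
theorem eigenstep_stays_in_region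
    (f : E → ℝ) (h : E → EuclideanSpace ℝ (Fin m))
    (hf : ContDiff ℝ ∞ f) (hh : ContDiff ℝ ∞ h)
    (R σl Ch : ℝ) (hR : 0 < R) (hσ : 0 < σl) (hCh : 0 < Ch)
    (hA1 : ∀ y : E, ‖h y‖ ≤ R → sigmaMin (fderiv ℝ h y) ≥ σl)
    (hA3 : ∀ y : E, ‖h y‖ ≤ R → ∀ v : E,
      ‖h (y + v) - h y - fderiv ℝ h y v‖ ≤ Ch * ‖v‖ ^ 2)
    (x : E) (hx : ‖h x‖ ≤ R)
    (β : ℝ) (hβ : β > max (beta1 f h x) (max (beta2 f h x) (beta3 h x)))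
    (ε₁ : ℝ) (hε₁ : 0 ≤ ε₁) (hε₁R : ε₁ ≤ R / 2)
    (hgrad : ‖gradient (flal f h β) x‖ ≤ ε₁) :
    ∀ d : E, ‖d‖ = 1 → ∀ t ∈ Set.Icc (0 : ℝ) (t2 h R Ch x),
      ‖h (x + t • d)‖ ≤ R := by
  have hone : (∞ : WithTop ℕ∞) ≠ 0 := by simp
  set A := fderiv ℝ h x with hAdef
  have hσx : sigmaMin A ≥ σl := hA1 x hx
  have hσpos : 0 < sigmaMin A := lt_of_lt_of_le hσ hσx
  have hu : IsUnit (Smap' h x) := isUnit_AAadj' A hσ hσx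
  -- β inequalities
  have hβ2 : Clam f h x < β * sigmaMin A := by
    have h1 : beta2 f h x < β :=
      lt_of_le_of_lt (le_trans (le_max_left _ _) (le_max_right _ _)) hβ
    rw [beta2] at h1
    rw [← hAdef] at h1
    exact (div_lt_iff₀ hσpos).mp h1
  have hβ3 : 1 < β * sigmaMin A := by
    have h1 : beta3 h x < β :=
      lt_of_le_of_lt (le_trans (le_max_right _ _) (le_max_right _ _)) hβ
    rw [beta3] at h1
    rw [← hAdef] at h1
    exact (div_lt_iff₀ hσpos).mp h1
  -- the key bound ‖h x‖ ≤ ε₁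
  obtain ⟨z, hz⟩ := (bijective_AAadj' A hσ hσx).2 (h x)
  set w := ContinuousLinearMap.adjoint A z with hwdef
  set L := fderiv ℝ (lam f h) x with hLdef
  have hlamd : DifferentiableAt ℝ (lam f h) x := lam_differentiableAt' f h hf hh x hu
  have hfd : HasFDerivAt f (fderiv ℝ f x) x :=
    (hf.differentiable hone x).hasFDerivAt
  have hhd : HasFDerivAt h A x := (hh.differentiable hone x).hasFDerivAt
  have hld : HasFDerivAt (lam f h) L x := hlamd.hasFDerivAt
  have hG : HasFDerivAt (flal f h β)
      ((fderiv ℝ f x - (fderivInnerCLM ℝ (lam f h x, h x)).comp (L.prod A))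
        + β • (2 • (innerSL ℝ (h x)).comp A)) x := by
    have : flal f h β = fun y => f y - ⟪lam f h y, h y⟫ + β * ‖h y‖ ^ 2 := rfl
    rw [this]
    exact (hfd.sub (hld.inner ℝ hhd)).add ((hhd.norm_sq).const_mul β)
  have hinner : ⟪gradient (flal f h β) x, w⟫
      = ((fderiv ℝ f x - (fderivInnerCLM ℝ (lam f h x, h x)).comp (L.prod A))
        + β • (2 • (innerSL ℝ (h x)).comp A)) w := by
    have h1 : gradient (flal f h β) x
        = (InnerProductSpace.toDual ℝ E).symm (fderiv ℝ (flal f h β) x) := rfl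
    rw [h1, hG.fderiv]
    exact InnerProductSpace.toDual_symm_apply
  have hGw : ((fderiv ℝ f x - (fderivInnerCLM ℝ (lam f h x, h x)).comp (L.prod A))
        + β • (2 • (innerSL ℝ (h x)).comp A)) w
      = fderiv ℝ f x w - (⟪lam f h x, A w⟫ + ⟪L w, h x⟫) + β * (2 * ⟪h x, A w⟫) := by
    simp [fderivInnerCLM_apply]
  have hAw : A w = h x := by
    rw [hwdef]
    exact hz
  have hTlam : A (ContinuousLinearMap.adjoint A (lam f h x)) = A (gradient f x) :=
    lam_T_apply' f h x (isUnit_bijective' hu).2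
  have e1 : fderiv ℝ f x w = ⟪lam f h x, A w⟫ := by
    have h1 : fderiv ℝ f x w = ⟪gradient f x, w⟫ :=
      (InnerProductSpace.toDual_symm_apply).symm
    rw [h1, hwdef]
    calc ⟪gradient f x, ContinuousLinearMap.adjoint A z⟫
        = ⟪A (gradient f x), z⟫ := ContinuousLinearMap.adjoint_inner_right A _ z
      _ = ⟪A (ContinuousLinearMap.adjoint A (lam f h x)), z⟫ := by rw [hTlam]
      _ = ⟪ContinuousLinearMap.adjoint A (lam f h x), ContinuousLinearMap.adjoint A z⟫ :=
          AAadj_inner' A _ z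
      _ = ⟪lam f h x, A (ContinuousLinearMap.adjoint A z)⟫ :=
          ContinuousLinearMap.adjoint_inner_left A _ _
  have e3 : ⟪h x, A w⟫ = ‖h x‖ ^ 2 := by
    rw [hAw, real_inner_self_eq_norm_sq]
  have hkey : 2 * β * ‖h x‖ ^ 2 = ⟪gradient (flal f h β) x, w⟫ + ⟪L w, h x⟫ := by
    rw [hinner, hGw, e1, e3]
    ring
  have hb1 : ⟪gradient (flal f h β) x, w⟫ ≤ ε₁ * ‖w‖ :=
    le_trans (real_inner_le_norm _ _)
      (mul_le_mul_of_nonneg_right hgrad (norm_nonneg _))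
  have hb2 : ⟪L w, h x⟫ ≤ Clam f h x * ‖w‖ * ‖h x‖ := by
    have hb21 : ⟪L w, h x⟫ ≤ ‖L w‖ * ‖h x‖ := real_inner_le_norm _ _
    have hb22 : ‖L w‖ * ‖h x‖ ≤ ‖L‖ * ‖w‖ * ‖h x‖ :=
      mul_le_mul_of_nonneg_right (L.le_opNorm w) (norm_nonneg _)
    have hC : Clam f h x = ‖L‖ := rfl
    rw [hC]
    linarith
  clear_value w L
  have hwnorm : sigmaMin A * ‖w‖ ≤ ‖h x‖ := by
    have h1 : sigmaMin A * ‖z‖ ≤ ‖w‖ := by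
      rw [hwdef]; exact sigmaMin_mul_le' A z
    have h2 : ‖w‖ ^ 2 = ⟪h x, z⟫ := by
      rw [← hz, ContinuousLinearMap.comp_apply, hwdef, ← real_inner_self_eq_norm_sq, AAadj_inner']
    have h3 : ⟪h x, z⟫ ≤ ‖h x‖ * ‖z‖ := real_inner_le_norm _ _
    exact aux_wbound h1 (le_of_eq_of_le h2 h3) hσpos (norm_nonneg _) (norm_nonneg _)
      (norm_nonneg _)
  have hHε : ‖h x‖ ≤ ε₁ := by
    have hCnn : 0 ≤ Clam f h x := norm_nonneg _
    have hineq : 2 * β * ‖h x‖ ^ 2 ≤ ε₁ * ‖w‖ + Clam f h x * ‖w‖ * ‖h x‖ := by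
      rw [hkey]; exact add_le_add hb1 hb2
    exact aux_hbound hineq hwnorm hσpos hβ2 hβ3 (norm_nonneg _) (norm_nonneg _) hε₁ hCnn
  have hhx2 : ‖h x‖ ≤ R / 2 := le_trans hHε hε₁R
  -- final geometric step
  intro d hd t ht
  have hvnorm : ‖t • d‖ = t := by
    rw [norm_smul, hd, mul_one, Real.norm_eq_abs, abs_of_nonneg ht.1]
  have htri : ‖h (x + t • d)‖ ≤ Ch * t ^ 2 + ‖A‖ * t + ‖h x‖ := by
    have hdecomp : h (x + t • d)
        = (h (x + t • d) - h x - A (t • d)) + (h x + A (t • d)) := by abel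
    calc ‖h (x + t • d)‖
        = ‖(h (x + t • d) - h x - A (t • d)) + (h x + A (t • d))‖ := by rw [← hdecomp]
      _ ≤ ‖h (x + t • d) - h x - A (t • d)‖ + ‖h x + A (t • d)‖ := norm_add_le _ _
      _ ≤ Ch * ‖t • d‖ ^ 2 + (‖h x‖ + ‖A (t • d)‖) :=
          add_le_add (hA3 x hx (t • d)) (norm_add_le _ _)
      _ ≤ Ch * t ^ 2 + (‖h x‖ + ‖A‖ * t) := by
          rw [hvnorm]
          refine add_le_add le_rfl (add_le_add le_rfl ?_)
          calc ‖A (t • d)‖ ≤ ‖A‖ * ‖t • d‖ := A.le_opNorm _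
            _ = ‖A‖ * t := by rw [hvnorm]
      _ = Ch * t ^ 2 + ‖A‖ * t + ‖h x‖ := by ring
  have ht2eq : t2 h R Ch x = (-‖A‖ + Real.sqrt (‖A‖ ^ 2 + 2 * Ch * R)) / (2 * Ch) := rfl
  have hfin : Ch * t ^ 2 + ‖A‖ * t ≤ R / 2 :=
    aux_t2 hCh hR (norm_nonneg A) ht.1 (ht2eq ▸ ht.2)
  calc ‖h (x + t • d)‖ ≤ Ch * t ^ 2 + ‖A‖ * t + ‖h x‖ := htri
    _ ≤ R / 2 + R / 2 := by linarith
    _ = R := by ring
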